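/- Let K be a compact subset of ℝ of infinite cardinality with cap(K) < 1. Then the Fekete kernel J(K) = { x ∈ K : P(x) = 0 for every polynomial P with integer coefficients satisfying ‖P‖_K < 1 } is a finite set. -/

import Mathlib

/-!
Since `cap(K) < 1`, for some `θ < 1` there are monic `T i` of degree `i` with
`‖T i‖_K ≤ C θ ^ i`. Integer polynomials of degree `< m` form the lattice `ℤ ^ m` in coefficient
space, and the map `c ↦ ∑ c i • T i` is unimodular there, so the image of the box
`|c i| ≤ (2 m ‖T i‖_K)⁻¹` has volume `∏ (m ‖T i‖_K)⁻¹`. Because `∏_{i < m} ‖T i‖_K` decays like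
`θ ^ (m² / 2)`, this exceeds `2 ^ m` for large `m`, and Minkowski's theorem yields a nonzero integer
polynomial with `‖P‖_K ≤ 1 / 2`. Every point of `J(K)` is a root of it.
-/

open Polynomial Filter

/-- The sup norm of a real polynomial on a set `K ⊆ ℝ`. -/
noncomputable def supNormOn (K : Set ℝ) (P : Polynomial ℝ) : ℝ :=
  sSup ((fun x => |P.eval x|) '' K)

/-- `m_n(K)`: the infimum of sup norms on `K` of monic real polynomials of degree `n`. -/
noncomputable def chebInf (K : Set ℝ) (n : ℕ) : ℝ :=
  sInf (supNormOn K '' {P : Polynomial ℝ | P.Monic ∧ P.natDegree = n})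

/-- The Fekete kernel `J(K)`: points of `K` killed by every integer polynomial of sup norm
`< 1` on `K`. -/
def feketeKernel (K : Set ℝ) : Set ℝ :=
  {x | x ∈ K ∧ ∀ P : Polynomial ℤ,
    supNormOn K (P.map (Int.castRingHom ℝ)) < 1 → Polynomial.aeval x P = 0}

open MeasureTheory Module Matrix Asymptotics Finset

theorem Matrix.exists_mulVec_eq_intCast_ne_zero {ι : Type*} [Fintype ι] [DecidableEq ι]
    (A : Matrix ι ι ℝ) {r : ι → ℝ} (hr : ∀ i, 0 ≤ r i) (h : 1 < |A.det| * ∏ i, r i) :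
    ∃ z : ι → ℤ, z ≠ 0 ∧ ∃ c : ι → ℝ, (∀ i, |c i| ≤ r i) ∧ A *ᵥ c = fun i => (z i : ℝ) := by
  let box : Set (ι → ℝ) := Set.univ.pi fun i => Set.Icc (-r i) (r i)
  let b := Pi.basisFun ℝ ι
  have hvol : volume (ZSpan.fundamentalDomain b) * 2 ^ finrank ℝ (ι → ℝ) <
      volume (toLin' A '' box) := by
    rw [ZSpan.fundamentalDomain_pi_basisFun, Measure.addHaar_image_linearMap, LinearMap.det_toLin',
      volume_pi_pi, volume_pi_pi]
    simp only [Real.volume_Ico, Real.volume_Icc, sub_zero, ENNReal.ofReal_one,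
      prod_const_one, one_mul, finrank_fintype_fun_eq_card, sub_neg_eq_add]
    rw [← ENNReal.ofReal_prod_of_nonneg (fun i _ => by linarith [hr i]), ← ENNReal.ofReal_mul
      (abs_nonneg _), ← ENNReal.ofReal_ofNat 2, ← ENNReal.ofReal_pow zero_le_two,
      ENNReal.ofReal_lt_ofReal_iff_of_nonneg (by positivity)]
    calc (2 : ℝ) ^ Fintype.card ι = 2 ^ Fintype.card ι * 1 := (mul_one _).symm
      _ < 2 ^ Fintype.card ι * (|A.det| * ∏ i, r i) := by gcongr
      _ = |A.det| * ∏ i, (r i + r i) := by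
        simp_rw [← two_mul, prod_mul_distrib, prod_const, card_univ]; ring
  have hsymm : ∀ x ∈ toLin' A '' box, -x ∈ toLin' A '' box := by
    rintro _ ⟨c, hc, rfl⟩
    refine ⟨-c, fun i _ => ?_, map_neg _ c⟩
    have := hc i trivial
    simp only [Set.mem_Icc, Pi.neg_apply] at this ⊢
    constructor <;> linarith [this.1, this.2]
  have hconv : Convex ℝ (toLin' A '' box) :=
    (convex_pi fun i _ => convex_Icc _ _).linear_image _
  have : Countable (Submodule.span ℤ (Set.range b)).toAddSubgroup :=
    inferInstanceAs (Countable (Submodule.span ℤ (Set.range b)))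
  obtain ⟨x, hx0, c, hc, hAc⟩ := exists_ne_zero_mem_lattice_of_measure_mul_two_pow_lt_measure
    (ZSpan.isAddFundamentalDomain' b volume) hsymm hconv hvol
  have hint : ∀ i, ∃ z : ℤ, (z : ℝ) = (x : ι → ℝ) i := fun i =>
    (b.mem_span_iff_repr_mem ℤ x).mp x.2 i
  choose z hz using hint
  refine ⟨z, fun h0 => hx0 ?_, c, fun i => abs_le.2 (hc i trivial), ?_⟩
  · ext i
    simp [← hz, h0]
  · rw [← toLin'_apply, hAc]
    exact funext fun i => (hz i).symm

section SupNorm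

variable {K : Set ℝ}

lemma supNormOn_nonneg (P : ℝ[X]) : 0 ≤ supNormOn K P :=
  Real.sSup_nonneg (by rintro _ ⟨x, -, rfl⟩; exact abs_nonneg _)

lemma abs_eval_le_supNormOn (hK : IsCompact K) {x : ℝ} (hx : x ∈ K) (P : ℝ[X]) :
    |P.eval x| ≤ supNormOn K P :=
  le_csSup (hK.bddAbove_image (continuous_abs.comp P.continuous).continuousOn) ⟨x, hx, rfl⟩

lemma supNormOn_le {P : ℝ[X]} {a : ℝ} (h : ∀ x ∈ K, |P.eval x| ≤ a) (ha : 0 ≤ a) :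
    supNormOn K P ≤ a :=
  Real.sSup_le (by rintro _ ⟨x, hx, rfl⟩; exact h x hx) ha

lemma supNormOn_pos (hK : IsCompact K) (hKinf : K.Infinite) {P : ℝ[X]} (hP : P ≠ 0) :
    0 < supNormOn K P := by
  obtain ⟨x, hxK, hxP⟩ := (hKinf.sdiff (P.finite_setOfPred_isRoot hP)).nonempty
  exact (abs_pos.2 hxP).trans_le (abs_eval_le_supNormOn hK hxK P)

lemma supNormOn_sum_C_mul_le (hK : IsCompact K) {ι : Type*} (s : Finset ι) (c : ι → ℝ)
    (T : ι → ℝ[X]) :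
    supNormOn K (∑ i ∈ s, C (c i) * T i) ≤ ∑ i ∈ s, |c i| * supNormOn K (T i) := by
  refine supNormOn_le (fun x hx => ?_) (sum_nonneg fun i _ => by
    have := supNormOn_nonneg (K := K) (T i); positivity)
  simp only [eval_finsetSum, eval_mul, eval_C]
  refine (abs_sum_le_sum_abs _ _).trans (sum_le_sum fun i _ => ?_)
  rw [abs_mul]
  exact mul_le_mul_of_nonneg_left (abs_eval_le_supNormOn hK hx _) (abs_nonneg _)

end SupNorm

lemma chebInf_nonneg (K : Set ℝ) (n : ℕ) : 0 ≤ chebInf K n :=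
  Real.sInf_nonneg (by rintro _ ⟨P, -, rfl⟩; exact supNormOn_nonneg P)

lemma exists_monic_supNormOn_lt_of_chebInf_lt {K : Set ℝ} {n : ℕ} {a : ℝ}
    (h : chebInf K n < a) : ∃ P : ℝ[X], P.Monic ∧ P.natDegree = n ∧ supNormOn K P < a := by
  obtain ⟨_, ⟨P, ⟨hPm, hPd⟩, rfl⟩, hP⟩ := exists_lt_of_csInf_lt
    (Set.Nonempty.image _ (⟨X ^ n, monic_X_pow n, natDegree_X_pow n⟩ :
      {P : ℝ[X] | P.Monic ∧ P.natDegree = n}.Nonempty)) h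
  exact ⟨P, hPm, hPd, hP⟩

lemma eventually_chebInf_lt_pow {K : Set ℝ} {c θ : ℝ}
    (hc : Tendsto (fun n : ℕ => chebInf K n ^ ((n : ℝ)⁻¹)) atTop (nhds c)) (hcθ : c < θ) :
    ∀ᶠ n in atTop, chebInf K n < θ ^ n := by
  filter_upwards [hc.eventually_lt_const hcθ, eventually_ne_atTop 0] with n hn hn0
  calc chebInf K n = (chebInf K n ^ ((n : ℝ)⁻¹)) ^ n :=
        (Real.rpow_inv_natCast_pow (chebInf_nonneg K n) hn0).symm
    _ < θ ^ n := pow_lt_pow_left₀ hn (Real.rpow_nonneg (chebInf_nonneg K n) _) hn0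

lemma exists_monic_supNormOn_le_mul_pow {K : Set ℝ} {c θ : ℝ}
    (hc : Tendsto (fun n : ℕ => chebInf K n ^ ((n : ℝ)⁻¹)) atTop (nhds c)) (hcθ : c < θ)
    (hθ : 0 < θ) :
    ∃ T : ℕ → ℝ[X], (∀ i, (T i).Monic) ∧ (∀ i, (T i).natDegree = i) ∧
      ∃ C, ∀ i, supNormOn K (T i) ≤ C * θ ^ i := by
  have hT : ∀ n, ∃ P : ℝ[X], P.Monic ∧ P.natDegree = n ∧
      (chebInf K n < θ ^ n → supNormOn K P < θ ^ n) := by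
    intro n
    by_cases h : chebInf K n < θ ^ n
    · obtain ⟨P, hPm, hPd, hP⟩ := exists_monic_supNormOn_lt_of_chebInf_lt h
      exact ⟨P, hPm, hPd, fun _ => hP⟩
    · exact ⟨X ^ n, monic_X_pow n, natDegree_X_pow n, fun h' => absurd h' h⟩
  choose T hTm hTd hTlt using hT
  have hO : (fun n => supNormOn K (T n)) =O[atTop] fun n => θ ^ n :=
    IsBigO.of_bound 1 <| (eventually_chebInf_lt_pow hc hcθ).mono fun n hn => by
      rw [Real.norm_of_nonneg (supNormOn_nonneg _), Real.norm_of_nonneg (by positivity), one_mul]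
      exact (hTlt n hn).le
  obtain ⟨C, -, hC⟩ := bound_of_isBigO_nat_atTop hO
  refine ⟨T, hTm, hTd, C, fun n => ?_⟩
  simpa [Real.norm_of_nonneg (supNormOn_nonneg _), abs_of_pos hθ] using
    hC (pow_ne_zero n hθ.ne')

lemma exists_prod_two_mul_lt_one_of_le_mul_pow {t : ℕ → ℝ} {C θ : ℝ} (ht : ∀ i, 0 ≤ t i)
    (hθ0 : 0 ≤ θ) (hθ1 : θ < 1) (hC : ∀ i, t i ≤ C * θ ^ i) :
    ∃ m : ℕ, ∏ i ∈ range m, (2 * m * t i) < 1 := by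
  set ρ := Real.sqrt θ
  have hρ0 : 0 ≤ ρ := Real.sqrt_nonneg θ
  have hρ1 : ρ < 1 := (Real.sqrt_lt' one_pos).2 (by simpa using hθ1)
  have hC0 : 0 ≤ C := by simpa using (ht 0).trans (hC 0)
  have hlim : Tendsto (fun n : ℕ => 2 * C * (n * ρ ^ n + ρ ^ n)) atTop (nhds 0) := by
    simpa using ((tendsto_self_mul_const_pow_of_lt_one hρ0 hρ1).add
      (tendsto_pow_atTop_nhds_zero_of_lt_one hρ0 hρ1)).const_mul (2 * C)
  obtain ⟨n, hn⟩ := (hlim.eventually_lt_const one_pos).exists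
  refine ⟨n + 1, ?_⟩
  -- `θ ^ (0 + 1 + ⋯ + n) = (√θ ^ n) ^ (n + 1)`, which beats the factor `(2 (n + 1) C) ^ (n + 1)`.
  have hsum : 2 * ∑ i ∈ range (n + 1), i = n * (n + 1) := by
    rw [Nat.mul_comm, sum_range_id_mul_two, Nat.add_sub_cancel, Nat.mul_comm]
  calc ∏ i ∈ range (n + 1), (2 * ↑(n + 1) * t i)
      ≤ ∏ i ∈ range (n + 1), (2 * ↑(n + 1) * C * θ ^ i) :=
        prod_le_prod (fun i _ => by have := ht i; positivity)
          fun i _ => by rw [mul_assoc _ C]; gcongr; exact hC i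
    _ = (2 * ↑(n + 1) * C * ρ ^ n) ^ (n + 1) := by
        rw [prod_mul_distrib, prod_const, card_range, prod_pow_eq_pow_sum,
          ← Real.sq_sqrt hθ0, ← pow_mul, hsum, pow_mul, ← mul_pow]
    _ < 1 := pow_lt_one₀ (by positivity) (by push_cast; linarith) (Nat.succ_ne_zero n)

lemma coeff_sum_C_mul_eq_mulVec {m : ℕ} (T : ℕ → ℝ[X]) (c : Fin m → ℝ) (k : Fin m) :
    (∑ j, C (c j) * T j).coeff k = (of (fun i j : Fin m => (T j).coeff i) *ᵥ c) k := by
  simp [mulVec, dotProduct, mul_comm]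

lemma exists_int_poly_map_eq_sum_C_mul {T : ℕ → ℝ[X]} (hTm : ∀ i, (T i).Monic)
    (hTd : ∀ i, (T i).natDegree = i) {m : ℕ} {r : Fin m → ℝ} (hr : ∀ i, 0 ≤ r i)
    (h : 1 < ∏ i, r i) :
    ∃ P : ℤ[X], P ≠ 0 ∧ ∃ c : Fin m → ℝ, (∀ i, |c i| ≤ r i) ∧
      P.map (Int.castRingHom ℝ) = ∑ i, C (c i) * T i := by
  let A : Matrix (Fin m) (Fin m) ℝ := of fun i j => (T j).coeff i
  have hA : A.det = 1 := by
    rw [det_of_isUpperTriangular]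
    · exact prod_eq_one fun i _ => by simpa [A, hTd] using (hTm i).coeff_natDegree
    · intro i j hji
      exact coeff_eq_zero_of_natDegree_lt (by rw [hTd]; exact hji)
  obtain ⟨z, hz0, c, hc, hAc⟩ :=
    A.exists_mulVec_eq_intCast_ne_zero hr (by rwa [hA, abs_one, one_mul])
  have hcoeff : ∀ k : Fin m, (∑ j, C (c j) * T j).coeff k = z k := fun k => by
    rw [coeff_sum_C_mul_eq_mulVec, hAc]
  have hcoeff_high : ∀ k, m ≤ k → (∑ j, C (c j) * T j).coeff k = 0 := fun k hk => by
    rw [finsetSum_coeff]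
    refine sum_eq_zero fun j _ => ?_
    rw [coeff_C_mul, coeff_eq_zero_of_natDegree_lt (by rw [hTd]; omega), mul_zero]
  obtain ⟨P, hP⟩ := (mem_lifts (f := Int.castRingHom ℝ) _).1 <|
    (lifts_iff_coeff_lifts _).2 fun k => by
      by_cases hk : k < m
      · exact ⟨z ⟨k, hk⟩, (hcoeff ⟨k, hk⟩).symm⟩
      · exact ⟨0, by rw [hcoeff_high k (not_lt.1 hk), map_zero]⟩
  refine ⟨P, ?_, c, hc, hP⟩
  rintro rfl
  refine hz0 (funext fun k => ?_)
  simpa [← hP] using (hcoeff k).symm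

lemma exists_int_poly_supNormOn_lt_one {K : Set ℝ} (hK : IsCompact K) (hKinf : K.Infinite)
    {T : ℕ → ℝ[X]} (hTm : ∀ i, (T i).Monic) (hTd : ∀ i, (T i).natDegree = i) {m : ℕ}
    (hm : ∏ i ∈ range m, (2 * m * supNormOn K (T i)) < 1) :
    ∃ P : ℤ[X], P ≠ 0 ∧ supNormOn K (P.map (Int.castRingHom ℝ)) < 1 := by
  have ht : ∀ i, 0 < supNormOn K (T i) := fun i => supNormOn_pos hK hKinf (hTm i).ne_zero
  have hm0 : (m : ℝ) ≠ 0 := by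
    rintro hm0
    simp [Nat.cast_eq_zero.1 hm0] at hm
  let r : Fin m → ℝ := fun i => (2 * m * supNormOn K (T i))⁻¹
  have hprod : 1 < ∏ i, r i := by
    rw [prod_inv_distrib, Fin.prod_univ_eq_prod_range (fun i => 2 * m * supNormOn K (T i))]
    exact one_lt_inv₀ (prod_pos fun i _ => by have := ht i; positivity) |>.2 hm
  obtain ⟨P, hP0, c, hc, hPc⟩ :=
    exists_int_poly_map_eq_sum_C_mul hTm hTd (fun i => by have := ht i; positivity) hprod
  refine ⟨P, hP0, ?_⟩
  calc supNormOn K (P.map (Int.castRingHom ℝ))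
      ≤ ∑ i, |c i| * supNormOn K (T i) := hPc ▸ supNormOn_sum_C_mul_le hK _ c _
    _ ≤ ∑ i : Fin m, r i * supNormOn K (T i) := sum_le_sum fun i _ =>
        mul_le_mul_of_nonneg_right (hc i) (ht i).le
    _ = 1 / 2 := by
        simp only [r, mul_inv, mul_assoc, inv_mul_cancel₀ (ht _).ne', mul_one, sum_const,
          card_univ, Fintype.card_fin, nsmul_eq_mul]
        field_simp
    _ < 1 := by norm_num

lemma feketeKernel_subset_rootSet {K : Set ℝ} {P : ℤ[X]} (hP0 : P ≠ 0)
    (hP : supNormOn K (P.map (Int.castRingHom ℝ)) < 1) : feketeKernel K ⊆ P.rootSet ℝ :=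
  fun _ hx => (mem_rootSet_of_ne hP0).2 (hx.2 P hP)

/-- If `cap(K) < 1`, the Fekete kernel `J(K)` is finite. -/
theorem feketeKernel_finite (K : Set ℝ) (hK : IsCompact K) (hKinf : K.Infinite)
    (c : ℝ) (hc : Tendsto (fun n : ℕ => chebInf K n ^ ((n : ℝ)⁻¹)) atTop (nhds c))
    (hcap : c < 1) :
    (feketeKernel K).Finite := by
  have hc0 : 0 ≤ c := ge_of_tendsto' hc fun n => Real.rpow_nonneg (chebInf_nonneg K n) _
  obtain ⟨θ, hcθ, hθ1⟩ := exists_between hcap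
  obtain ⟨T, hTm, hTd, C, hC⟩ := exists_monic_supNormOn_le_mul_pow hc hcθ (hc0.trans_lt hcθ)
  obtain ⟨m, hm⟩ := exists_prod_two_mul_lt_one_of_le_mul_pow (fun i => supNormOn_nonneg (T i))
    (hc0.trans hcθ.le) hθ1 hC
  obtain ⟨P, hP0, hP⟩ := exists_int_poly_supNormOn_lt_one hK hKinf hTm hTd hm
  exact (P.rootSet_finite ℝ).subset (feketeKernel_subset_rootSet hP0 hP)
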